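/- Let (X, {R_0,...,R_d}) be a symmetric association scheme with Γ = (X, R_1) connected, H the unweighted distribution diagram of R_1, and suppose H' = H \ {0,1} is disconnected. Let Ĩ = {i : 1 ≤ i ≤ d, p_{11}^i = p_{11}^0}, let Ũ be the vertex set of a connected component of H' having more than one vertex which minimizes Σ_{i∈Ũ} v_i among all such components, and let W̃ = {2,...,d} \ (Ĩ ∪ Ũ). If W̃ ≠ ∅, then for every x ∈ X and every u ∈ X with (x,u) ∈ R_h for some h ∈ Ũ, the distance from x to u in Γ equals 2. -/

import Mathlib

/-- A symmetric association scheme with `d` classes on a finite vertex set `X`: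
a partition of `X × X` into nonempty symmetric relations `R 0, …, R d`, where
`R 0` is the identity relation, together with intersection numbers `p i j k`. -/
structure SymAssocScheme (X : Type*) [Fintype X] (d : ℕ) where
  R : Fin (d + 1) → X → X → Prop
  R_nonempty : ∀ i, ∃ a b, R i a b
  R_symm : ∀ i a b, R i a b → R i b a
  R_zero : ∀ a b, R 0 a b ↔ a = b
  R_unique : ∀ a b, ∃! i, R i a b
  p : Fin (d + 1) → Fin (d + 1) → Fin (d + 1) → ℕ
  p_spec : ∀ (i j k : Fin (d + 1)) (a b : X), R k a b →
    {c : X | R i a c ∧ R j c b}.ncard = p i j k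

namespace SymAssocScheme

variable {X : Type*} [Fintype X] {d : ℕ}

/-- The (simple) graph `Γ = (X, R_i)` of the basis relation `R_i`. -/
def graph (A : SymAssocScheme X d) (i : Fin (d + 1)) : SimpleGraph X where
  Adj a b := a ≠ b ∧ A.R i a b
  symm := ⟨fun a b h => ⟨h.1.symm, A.R_symm i a b h.2⟩⟩
  loopless := ⟨fun a h => h.1 rfl⟩

/-- The unweighted distribution diagram `H_i` (with loops discarded):
`j ~ k` iff `p i j k + p i k j > 0`. -/
def diagram (A : SymAssocScheme X d) (i : Fin (d + 1)) : SimpleGraph (Fin (d + 1)) where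
  Adj j k := j ≠ k ∧ 0 < A.p i j k + A.p i k j
  symm := ⟨fun j k h => ⟨h.1.symm, by omega⟩⟩
  loopless := ⟨fun j h => h.1 rfl⟩

end SymAssocScheme

/-!
Write `Γ = (X, R_i)` (the theorem is the case `i = 1`) and call a class `m ∉ {0, i}` *far* if
`p_{ii}^m = 0`, i.e. its pairs are at distance at least 3 in `Γ`. If `(x, a) ∈ R_k` and
`(a, b) ∈ R_i`, then the class of `(x, b)` is `k` or an `H`-neighbour of `k`. So while `b` moves
along `Γ` avoiding `x` and its neighbours, the class of `(x, b)` stays in one component of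
`H' = H \ {0, i}`. With the connectivity of `Γ` this gives, for a component `C` of `H'` containing
a far class, a path `x ~ a ~ b ~ u` with `(x, u)` far in `C`; such a `u` is far from every `y` whose
class relative to `x` lies in another component `Q`.

Hence all far classes lie in one component. If some `h ∈ Ũ` were far, then `y ↦ (u, y)` shows
`1 + ∑_Q v ≤ ∑_{far classes of Ũ} v < ∑_Ũ v` for every other component `Q`, so by minimality each
other component is a single class. For `j ∈ W̃` the path argument then gives `p_{jj}^i = 0`, so
for `(a, b) ∈ R_j` every `Γ`-neighbour of `a` is one of `b`, that is `p_{ii}^j = p_{ii}^0`,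
contradicting `j ∉ Ĩ`. Therefore `p_{ii}^h > 0`, and `d_Γ(x, u) = 2`.
-/

namespace SimpleGraph

variable {V : Type*} {G : SimpleGraph V} {s : Set V}

lemma ConnectedComponent.eq_of_mem_image_supp {C C' : (G.induce s).ConnectedComponent} {v : V}
    (hC : v ∈ Subtype.val '' C.supp) (hC' : v ∈ Subtype.val '' C'.supp) : C = C' := by
  obtain ⟨w, hw, rfl⟩ := hC
  obtain ⟨w', hw', hww'⟩ := hC'
  rw [← Subtype.ext hww'] at hw
  exact hw.symm.trans hw'

lemma ConnectedComponent.mem_image_supp_of_adj {C : (G.induce s).ConnectedComponent} {v w : V}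
    (hv : v ∈ Subtype.val '' C.supp) (hadj : G.Adj w v) (hw : w ∈ s) :
    w ∈ Subtype.val '' C.supp := by
  obtain ⟨v, hvC, rfl⟩ := hv
  exact ⟨⟨w, hw⟩,
    (connectedComponentMk_eq_of_adj (G := G.induce s) (v := ⟨w, hw⟩) hadj).trans hvC, rfl⟩

end SimpleGraph

namespace SymAssocScheme

variable {X : Type*} [Fintype X] {d : ℕ} (A : SymAssocScheme X d)

noncomputable def cls (a b : X) : Fin (d + 1) :=
  (A.R_unique a b).choose

variable {A} {i j k m m' : Fin (d + 1)} {a b c x y : X}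

lemma R_cls (a b : X) : A.R (A.cls a b) a b :=
  (A.R_unique a b).choose_spec.1

lemma cls_eq_iff : A.cls a b = m ↔ A.R m a b :=
  ⟨fun h => h ▸ R_cls a b, fun h => ((A.R_unique a b).choose_spec.2 m h).symm⟩

lemma R_self (a : X) : A.R 0 a a := (A.R_zero a a).mpr rfl

lemma cls_eq_zero_iff : A.cls a b = 0 ↔ a = b :=
  cls_eq_iff.trans (A.R_zero a b)

lemma eq_of_R_of_R (hm : A.R m a b) (hm' : A.R m' a b) : m = m' :=
  (cls_eq_iff.mpr hm).symm.trans (cls_eq_iff.mpr hm')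

lemma cls_comm (a b : X) : A.cls a b = A.cls b a :=
  cls_eq_iff.mpr (A.R_symm _ _ _ (R_cls b a))

lemma p_pos_iff (hab : A.R k a b) : 0 < A.p i j k ↔ ∃ c, A.R i a c ∧ A.R j c b := by
  rw [← A.p_spec i j k a b hab, Set.ncard_pos (Set.toFinite _)]
  rfl

lemma p_eq_zero_iff (hab : A.R k a b) : A.p i j k = 0 ↔ ∀ c, A.R i a c → ¬ A.R j c b := by
  rw [← Nat.le_zero, ← not_lt, p_pos_iff hab]
  push Not
  rfl

lemma p_comm (i j k : Fin (d + 1)) : A.p i j k = A.p j i k := by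
  obtain ⟨a, b, hab⟩ := A.R_nonempty k
  rw [← A.p_spec i j k a b hab, ← A.p_spec j i k b a (A.R_symm _ _ _ hab)]
  congr 1
  ext c
  exact ⟨fun ⟨h₁, h₂⟩ => ⟨A.R_symm _ _ _ h₂, A.R_symm _ _ _ h₁⟩,
    fun ⟨h₁, h₂⟩ => ⟨A.R_symm _ _ _ h₂, A.R_symm _ _ _ h₁⟩⟩

lemma valency_pos (hab : A.R m a b) : 0 < A.p m m 0 :=
  (p_pos_iff (R_self a)).mpr ⟨b, hab, A.R_symm _ _ _ hab⟩

lemma exists_R (m : Fin (d + 1)) (x : X) : ∃ y, A.R m x y := by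
  obtain ⟨a, b, hab⟩ := A.R_nonempty m
  obtain ⟨y, hy, -⟩ := (p_pos_iff (R_self x)).mp (valency_pos hab)
  exact ⟨y, hy⟩

lemma ncard_cls_eq (x : X) (m : Fin (d + 1)) : {y | A.cls x y = m}.ncard = A.p m m 0 := by
  rw [← A.p_spec m m 0 x x (R_self x)]
  congr 1
  ext y
  exact cls_eq_iff.trans ⟨fun h => ⟨h, A.R_symm _ _ _ h⟩, And.left⟩

lemma ncard_cls_mem (x : X) (K : Finset (Fin (d + 1))) :
    {y | A.cls x y ∈ K}.ncard = ∑ m ∈ K, A.p m m 0 := by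
  classical
  rw [Set.ncard_eq_toFinset_card', Finset.card_eq_sum_card_fiberwise (f := A.cls x) (t := K)]
  · refine Finset.sum_congr rfl fun m hm => ?_
    rw [← ncard_cls_eq x m, Set.ncard_eq_toFinset_card']
    congr 1
    ext y
    simpa using fun h => h ▸ hm
  · intro y hy
    simpa using hy

lemma cls_eq_or_adj (hxa : A.R k x a) (hab : A.R i a b) :
    A.cls x b = k ∨ (A.diagram i).Adj (A.cls x b) k := by
  refine or_iff_not_imp_left.mpr fun hne => ⟨hne, ?_⟩
  have := (p_pos_iff (R_cls x b)).mpr ⟨a, hxa, hab⟩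
  rw [p_comm] at this
  omega

abbrev reducedDiagram (A : SymAssocScheme X d) (i : Fin (d + 1)) :
    SimpleGraph {j : Fin (d + 1) | j ≠ 0 ∧ j ≠ i} :=
  (A.diagram i).induce {j | j ≠ 0 ∧ j ≠ i}

variable {C C' Q : (A.reducedDiagram i).ConnectedComponent} {h : Fin (d + 1)} {u : X}

lemma ne_of_mem_supp (hm : m ∈ Subtype.val '' C.supp) : m ≠ 0 ∧ m ≠ i := by
  obtain ⟨⟨m, hm⟩, -, rfl⟩ := hm
  exact hm

lemma cls_mem_of_R (ha : A.cls x a ∈ Subtype.val '' C.supp) (hab : A.R i a b)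
    (h0 : A.cls x b ≠ 0) (hi : A.cls x b ≠ i) : A.cls x b ∈ Subtype.val '' C.supp := by
  rcases cls_eq_or_adj (R_cls x a) hab with he | hadj
  · rwa [he]
  · exact C.mem_image_supp_of_adj ha hadj ⟨h0, hi⟩

lemma cls_ne_of_far (hba : A.cls b a ≠ i) (hfar : A.p i i (A.cls b a) = 0) (hac : A.R i a c) :
    A.cls b c ≠ 0 ∧ A.cls b c ≠ i := by
  refine ⟨fun he => ?_, fun he => (p_eq_zero_iff (R_cls b a)).mp hfar c (cls_eq_iff.mp he)
    (A.R_symm _ _ _ hac)⟩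
  obtain rfl := cls_eq_zero_iff.mp he
  exact hba (cls_eq_iff.mpr (A.R_symm _ _ _ hac))

lemma cls_mem_of_far (ha : A.cls x a ∈ Subtype.val '' C.supp) (hfar : A.p i i (A.cls x a) = 0)
    (hab : A.R i a b) : A.cls x b ∈ Subtype.val '' C.supp :=
  cls_mem_of_R ha hab (cls_ne_of_far (ne_of_mem_supp ha).2 hfar hab).1
    (cls_ne_of_far (ne_of_mem_supp ha).2 hfar hab).2

lemma far_of_mem_of_ne (hu : A.cls x u ∈ Subtype.val '' C.supp) (hfar : A.p i i (A.cls x u) = 0)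
    (hy : A.cls x y ∈ Subtype.val '' Q.supp) (hQC : Q ≠ C) :
    A.cls y u ≠ 0 ∧ A.cls y u ≠ i ∧ A.p i i (A.cls y u) = 0 := by
  have hyC : A.cls x y ∉ Subtype.val '' C.supp := fun hyC =>
    hQC (SimpleGraph.ConnectedComponent.eq_of_mem_image_supp hy hyC)
  refine ⟨fun he => ?_,
    fun he => hyC (cls_mem_of_far hu hfar (A.R_symm _ _ _ (cls_eq_iff.mp he))),
    (p_eq_zero_iff (R_cls y u)).mpr fun w hyw hwu => ?_⟩
  · obtain rfl := cls_eq_zero_iff.mp he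
    exact hyC hu
  · exact hyC (cls_mem_of_R (cls_mem_of_far hu hfar (A.R_symm _ _ _ hwu)) (A.R_symm _ _ _ hyw)
      (ne_of_mem_supp hy).1 (ne_of_mem_supp hy).2)

lemma exists_path_of_far (hconn : (A.graph i).Connected) (hh : h ∈ Subtype.val '' C.supp)
    (hfar : A.p i i h = 0) (x : X) :
    ∃ c c₂ u, A.R i x c ∧ A.R i c c₂ ∧ A.R i c₂ u ∧
      A.cls x c₂ ∈ Subtype.val '' C.supp ∧ 0 < A.p i i (A.cls x c₂) ∧
      A.cls x u ∈ Subtype.val '' C.supp ∧ A.p i i (A.cls x u) = 0 := by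
  obtain ⟨y, hy⟩ := exists_R (A := A) h x
  let S : Set X := {z | A.cls x z ∈ Subtype.val '' C.supp ∧ A.p i i (A.cls x z) = 0}
  have hyS : y ∈ S := by
    show _ ∧ _
    rw [cls_eq_iff.mpr hy]
    exact ⟨hh, hfar⟩
  have hxS : x ∉ S := fun hx => (ne_of_mem_supp hx.1).1 (cls_eq_zero_iff.mpr rfl)
  obtain ⟨⟨⟨z, z'⟩, hzz'⟩, -, hz, hz'⟩ :=
    (hconn.preconnected y x).some.exists_boundary_dart S hyS hxS
  have hz'C := cls_mem_of_far hz.1 hz.2 hzz'.2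
  have hnear : 0 < A.p i i (A.cls x z') := Nat.pos_of_ne_zero fun he => hz' ⟨hz'C, he⟩
  obtain ⟨c, hxc, hcz'⟩ := (p_pos_iff (R_cls x z')).mp hnear
  exact ⟨c, z', z, hxc, hcz', A.R_symm _ _ _ hzz'.2, hz'C, hnear, hz.1, hz.2⟩

lemma cls_mem_of_path (hu : A.cls x u ∈ Subtype.val '' C.supp) (hfu : A.p i i (A.cls x u) = 0)
    (hxa : A.R i x a) (hab : A.R i a b) (hbu : A.R i b u)
    (hy : A.cls x y ∈ Subtype.val '' Q.supp) (hfy : A.p i i (A.cls x y) = 0) (hQC : Q ≠ C) :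
    A.cls y u ∈ Subtype.val '' Q.supp := by
  obtain ⟨hyu0, hyui, hfyu⟩ := far_of_mem_of_ne hu hfu hy hQC
  rw [cls_comm] at hy hfy
  have ha := cls_ne_of_far (ne_of_mem_supp hy).2 hfy hxa
  have hb := cls_ne_of_far hyui hfyu (A.R_symm _ _ _ hbu)
  exact cls_mem_of_R (cls_mem_of_R (cls_mem_of_R hy hxa ha.1 ha.2) hab hb.1 hb.2) hbu hyu0 hyui

lemma component_eq_of_far (hconn : (A.graph i).Connected) {h h' : Fin (d + 1)}
    (hh : h ∈ Subtype.val '' C.supp) (hf : A.p i i h = 0)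
    (hh' : h' ∈ Subtype.val '' C'.supp) (hf' : A.p i i h' = 0) : C = C' := by
  by_contra hne
  obtain ⟨x, -, -⟩ := A.R_nonempty 0
  obtain ⟨a, b, u, hxa, hab, hbu, -, -, hu, hfu⟩ := exists_path_of_far hconn hh hf x
  obtain ⟨a', b', y, hxa', ha'b', hb'y, -, -, hy, hfy⟩ := exists_path_of_far hconn hh' hf' x
  have hyu := cls_mem_of_path hu hfu hxa hab hbu hy hfy (Ne.symm hne)
  have huy := cls_mem_of_path hy hfy hxa' ha'b' hb'y hu hfu hne
  rw [cls_comm] at huy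
  exact hne (SimpleGraph.ConnectedComponent.eq_of_mem_image_supp huy hyu)

lemma p_eq_zero_of_mem_of_ne (hconn : (A.graph i).Connected) (hh : h ∈ Subtype.val '' C.supp)
    (hfar : A.p i i h = 0) (hQC : Q ≠ C) (hj : j ∈ Subtype.val '' Q.supp)
    (hk : k ∈ Subtype.val '' Q.supp) : A.p j k i = 0 := by
  obtain ⟨x, -, -⟩ := A.R_nonempty 0
  obtain ⟨a, b, u, hxa, hab, hbu, -, -, hu, hfu⟩ := exists_path_of_far hconn hh hfar x
  refine (p_eq_zero_iff hxa).mpr fun y hxy hya => ?_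
  rw [← cls_eq_iff] at hxy hya
  subst hxy hya
  obtain ⟨hyu0, hyui, hfyu⟩ := far_of_mem_of_ne hu hfu hj hQC
  have hb := cls_ne_of_far hyui hfyu (A.R_symm _ _ _ hbu)
  have hyu := cls_mem_of_R (cls_mem_of_R hk hab hb.1 hb.2) hbu hyu0 hyui
  exact hQC (component_eq_of_far hconn hyu hfyu hh hfar)

lemma cls_mem_of_mem_of_ne (hconn : (A.graph i).Connected)
    (hu : A.cls x u ∈ Subtype.val '' C.supp) (hfar : A.p i i (A.cls x u) = 0)
    (hy : A.cls x y ∈ Subtype.val '' Q.supp) (hQC : Q ≠ C) :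
    A.cls y u ∈ Subtype.val '' C.supp ∧ A.p i i (A.cls y u) = 0 := by
  obtain ⟨h0, hi, hf⟩ := far_of_mem_of_ne hu hfar hy hQC
  have hC := component_eq_of_far hconn
    (C := (A.reducedDiagram i).connectedComponentMk ⟨A.cls y u, h0, hi⟩) ⟨_, rfl, rfl⟩ hf
    hu hfar
  exact ⟨hC ▸ ⟨_, rfl, rfl⟩, hf⟩

lemma sum_valency_lt (hconn : (A.graph i).Connected) {U Q' : Finset (Fin (d + 1))}
    (hUC : (U : Set (Fin (d + 1))) = Subtype.val '' C.supp)
    (hQ' : (Q' : Set (Fin (d + 1))) = Subtype.val '' Q.supp)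
    (hh : h ∈ U) (hfar : A.p i i h = 0) (hQC : Q ≠ C) :
    ∑ m ∈ Q', A.p m m 0 < ∑ m ∈ U, A.p m m 0 := by
  classical
  obtain ⟨x, -, -⟩ := A.R_nonempty 0
  obtain ⟨-, b, u, -, -, -, hb, hfb, hu, hfu⟩ :=
    exists_path_of_far hconn (hUC ▸ Finset.mem_coe.mpr hh) hfar x
  have hsub : insert x {y | A.cls x y ∈ Q'} ⊆
      {y | A.cls u y ∈ U.filter (fun m => A.p i i m = 0)} := by
    rintro y (rfl | hy)
    · change A.cls u y ∈ U.filter _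
      rw [cls_comm, Finset.mem_filter, ← Finset.mem_coe, hUC]
      exact ⟨hu, hfu⟩
    · change A.cls x y ∈ Q' at hy
      rw [← Finset.mem_coe, hQ'] at hy
      change A.cls u y ∈ U.filter _
      rw [cls_comm, Finset.mem_filter, ← Finset.mem_coe, hUC]
      exact cls_mem_of_mem_of_ne hconn hu hfu hy hQC
  have hx : x ∉ {y | A.cls x y ∈ Q'} := fun hx => by
    change A.cls x x ∈ Q' at hx
    rw [← Finset.mem_coe, hQ', cls_eq_zero_iff.mpr rfl] at hx
    exact (ne_of_mem_supp hx).1 rfl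
  have hcard := Set.ncard_le_ncard hsub
  rw [Set.ncard_insert_of_notMem hx, ncard_cls_mem, ncard_cls_mem] at hcard
  have hfarU : ∑ m ∈ U.filter (fun m => A.p i i m = 0), A.p m m 0 < ∑ m ∈ U, A.p m m 0 :=
    Finset.sum_lt_sum_of_subset (Finset.filter_subset _ U)
      (Finset.mem_coe.mp (hUC ▸ hb)) (fun hbU => hfb.ne' (Finset.mem_filter.mp hbU).2)
      (valency_pos (R_cls x b)) fun _ _ _ => Nat.zero_le _
  omega

lemma p_eq_valency_of_subsingleton (hj : j ∈ Subtype.val '' Q.supp) (hQ : Q.supp.Subsingleton)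
    (hp : A.p j j i = 0) : A.p i i j = A.p i i 0 := by
  obtain ⟨a, b, hab⟩ := A.R_nonempty j
  have hQj : ∀ m ∈ Subtype.val '' Q.supp, m = j := by
    rintro _ ⟨m, hm, rfl⟩
    obtain ⟨j', hj', rfl⟩ := hj
    exact congrArg Subtype.val (hQ hm hj')
  have hnbr : ∀ w, A.R i a w → A.R i w b := by
    intro w haw
    by_contra hwb
    have hba : A.cls b a ∈ Subtype.val '' Q.supp := (cls_eq_iff.mpr (A.R_symm _ _ _ hab)) ▸ hj
    have h0 : A.cls b w ≠ 0 := fun he => by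
      obtain rfl := cls_eq_zero_iff.mp he
      exact (ne_of_mem_supp hj).2 (eq_of_R_of_R hab haw)
    have hbw := hQj _ (cls_mem_of_R hba haw h0 fun he => hwb (A.R_symm _ _ _ (cls_eq_iff.mp he)))
    exact (p_eq_zero_iff haw).mp hp b hab (cls_eq_iff.mp hbw)
  rw [← A.p_spec i i j a b hab, ← A.p_spec i i 0 a a (R_self a)]
  congr 1
  ext w
  exact ⟨fun hw => ⟨hw.1, A.R_symm _ _ _ hw.1⟩, fun hw => ⟨hw.1, hnbr w hw.1⟩⟩

lemma dist_eq_two_of_p_pos (hi : i ≠ 0) (hxu : A.R h x u) (h0 : h ≠ 0) (hhi : h ≠ i)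
    (hp : 0 < A.p i i h) : (A.graph i).dist x u = 2 := by
  obtain ⟨w, hxw, hwu⟩ := (p_pos_iff hxu).mp hp
  have hadj : ∀ {a b : X}, A.R i a b → (A.graph i).Adj a b := fun hab =>
    ⟨fun he => hi (by subst he; exact eq_of_R_of_R hab (R_self _)), hab⟩
  let p := SimpleGraph.Walk.cons (hadj hxw) (SimpleGraph.Walk.cons (hadj hwu) .nil)
  have h2 : (A.graph i).dist x u ≤ 2 := SimpleGraph.dist_le p
  have hne0 : (A.graph i).dist x u ≠ 0 := fun he => h0 <| by
    rw [p.reachable.dist_eq_zero_iff] at he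
    subst he
    exact eq_of_R_of_R hxu (R_self _)
  have hne1 : (A.graph i).dist x u ≠ 1 := fun he =>
    hhi (eq_of_R_of_R hxu (SimpleGraph.dist_eq_one_iff_adj.mp he).2)
  omega

end SymAssocScheme

open SymAssocScheme in
theorem dist_two_of_U_general {X : Type*} [Fintype X] {d : ℕ} (hd : 0 < d)
    (A : SymAssocScheme X d) (hconn : (A.graph 1).Connected)
    (Itil : Set (Fin (d + 1)))
    (hI : Itil = {j : Fin (d + 1) | j ≠ 0 ∧ A.p 1 1 j = A.p 1 1 0})
    (Util : Finset (Fin (d + 1)))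
    (hU : ∃ c : ((A.diagram 1).induce
          {j : Fin (d + 1) | j ≠ 0 ∧ j ≠ 1}).ConnectedComponent,
        (Util : Set (Fin (d + 1))) = Subtype.val '' c.supp ∧ c.supp.Nontrivial)
    (hUmin : ∀ U' : Finset (Fin (d + 1)),
        (∃ c : ((A.diagram 1).induce
            {j : Fin (d + 1) | j ≠ 0 ∧ j ≠ 1}).ConnectedComponent,
          (U' : Set (Fin (d + 1))) = Subtype.val '' c.supp ∧ c.supp.Nontrivial) →
        ∑ j ∈ Util, A.p j j 0 ≤ ∑ j ∈ U', A.p j j 0)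
    (Wtil : Set (Fin (d + 1)))
    (hW : Wtil = {j : Fin (d + 1) | j ≠ 0 ∧ j ≠ 1 ∧ j ∉ Itil ∧ j ∉ Util})
    (hWne : Wtil.Nonempty) :
    ∀ (x u : X) (h : Fin (d + 1)), h ∈ Util → A.R h x u →
      (A.graph 1).dist x u = 2 := by
  have : NeZero d := ⟨hd.ne'⟩
  obtain ⟨C, hUC, -⟩ := hU
  intro x u h hhU hxu
  have hhC : h ∈ Subtype.val '' C.supp := hUC ▸ Finset.mem_coe.mpr hhU
  refine dist_eq_two_of_p_pos Fin.one_pos'.ne' hxu (ne_of_mem_supp hhC).1 (ne_of_mem_supp hhC).2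
    (Nat.pos_of_ne_zero fun hfar => ?_)
  obtain ⟨j, hj0, hj1, hjI, hjU⟩ := hW ▸ hWne
  set Q := (A.reducedDiagram 1).connectedComponentMk ⟨j, hj0, hj1⟩
  have hjQ : j ∈ Subtype.val '' Q.supp := ⟨_, rfl, rfl⟩
  have hQC : Q ≠ C := fun hQC => hjU (Finset.mem_coe.mp (hUC ▸ hQC ▸ hjQ))
  have hQ : Q.supp.Subsingleton := Set.not_nontrivial_iff.mp fun hQ => by
    obtain ⟨Q', hQ'⟩ := (Set.toFinite (Subtype.val '' Q.supp)).exists_finset_coe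
    exact (hUmin Q' ⟨Q, hQ', hQ⟩).not_gt (sum_valency_lt hconn hUC hQ' hhU hfar hQC)
  exact hjI (hI ▸ ⟨hj0, p_eq_valency_of_subsingleton hjQ hQ
    (p_eq_zero_of_mem_of_ne hconn hhC hfar hQC hjQ hjQ)⟩)

open SymAssocScheme in
/-- Lemma 3.7: with `Γ = (X, R_1)` connected, `H' = H \ {0,1}` disconnected,
`Ĩ = {i ≠ 0 : p_{11}^i = p_{11}^0}`, `Ũ` the vertex set of a non-singleton component
of `H'` minimizing `∑_{i ∈ Ũ} v_i`, and `W̃ = {2,…,d} \ (Ĩ ∪ Ũ)` nonempty: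
for every `x` and every `u` with `(x,u) ∈ R_h` for some `h ∈ Ũ`, `d_Γ(x,u) = 2`. -/
theorem dist_two_of_U {X : Type*} [Fintype X] {d : ℕ} (hd : 0 < d)
    (A : SymAssocScheme X d) (hconn : (A.graph 1).Connected)
    (hH' : ¬ ((A.diagram 1).induce {j : Fin (d + 1) | j ≠ 0 ∧ j ≠ 1}).Connected)
    (Itil : Set (Fin (d + 1)))
    (hI : Itil = {j : Fin (d + 1) | j ≠ 0 ∧ A.p 1 1 j = A.p 1 1 0})
    (Util : Finset (Fin (d + 1)))
    (hU : ∃ c : ((A.diagram 1).induce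
          {j : Fin (d + 1) | j ≠ 0 ∧ j ≠ 1}).ConnectedComponent,
        (Util : Set (Fin (d + 1))) = Subtype.val '' c.supp ∧ c.supp.Nontrivial)
    (hUmin : ∀ U' : Finset (Fin (d + 1)),
        (∃ c : ((A.diagram 1).induce
            {j : Fin (d + 1) | j ≠ 0 ∧ j ≠ 1}).ConnectedComponent,
          (U' : Set (Fin (d + 1))) = Subtype.val '' c.supp ∧ c.supp.Nontrivial) →
        ∑ j ∈ Util, A.p j j 0 ≤ ∑ j ∈ U', A.p j j 0)
    (Wtil : Set (Fin (d + 1)))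
    (hW : Wtil = {j : Fin (d + 1) | j ≠ 0 ∧ j ≠ 1 ∧ j ∉ Itil ∧ j ∉ Util})
    (hWne : Wtil.Nonempty) :
    ∀ (x u : X) (h : Fin (d + 1)), h ∈ Util → A.R h x u →
      (A.graph 1).dist x u = 2 :=
  dist_two_of_U_general hd A hconn Itil hI Util hU hUmin Wtil hW hWne
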